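/- arXiv:1808.06050 — 4 statements merged into one kernel-verified Lean document; each statement's English description precedes it below -/
import Mathlib

section
/- Let r>0, n∈ℕ and 𝒞 = C([-r,0],ℝⁿ). Fix γ ∈ (0,1], υ > 0, C > 0, θ ∈ (0,1), and a function p : (0,∞) → [0,1] with p(s)/s^γ → 0 as s → 0. Suppose that for a family {μ^x : x ∈ 𝒞} of probability measures on 𝒞 there are families of 𝒞-valued random elements {ξ^{x,y} : x,y ∈ 𝒞} and {η^{x,y} : x,y ∈ 𝒞} (each pair ξ^{x,y}, η^{x,y} defined on a common probability space) such that: (i) Law(ξ^{x,y}) = μ^x for all x,y, and d_TV(Law(η^{x,y}), μ^y) ≤ C‖x−y‖^γ whenever ‖x−y‖ ≤ υ; (ii) P(‖ξ^{x,y} − η^{x,y}‖ > θ‖x−y‖) ≤ p(‖x−y‖) whenever ‖x−y‖ ≤ υ. Then for every θ₁ ∈ (θ^γ, 1) there exists N₀ (depending only on γ, υ, C, θ, θ₁ and p) such that for all N ≥ N₀ and all x, y ∈ 𝒞 with d_{N,γ}(x,y) < 1, the coupling distance satisfies d_{N,γ}(μ^x, μ^y) ≤ θ₁ · d_{N,γ}(x,y).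 -/
open MeasureTheory Set

/-- The space `𝒞 = C([-r,0], ℝⁿ)` with the supremum norm. -/
abbrev PathSpace (r : ℝ) (n : ℕ) : Type :=
  C(Set.Icc (-r) (0:ℝ), EuclideanSpace ℝ (Fin n))

noncomputable instance (r : ℝ) (n : ℕ) : MeasurableSpace (PathSpace r n) := borel _

instance (r : ℝ) (n : ℕ) : BorelSpace (PathSpace r n) := ⟨rfl⟩

/-- The metric `d_{N,γ}(x,y) = min(N‖x−y‖^γ, 1)`. -/
noncomputable def dNg {E : Type*} [NormedAddCommGroup E] (N γ : ℝ) (x y : E) : ℝ :=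
  min (N * ‖x - y‖ ^ γ) 1

/-- The total variation distance `d_TV(μ,ν) = sup_A |μ(A) − ν(A)|`. -/
noncomputable def tvDist {α : Type*} [MeasurableSpace α] (μ ν : Measure α) : ℝ :=
  ⨆ A : {s : Set α // MeasurableSet s}, |(μ A).toReal - (ν A).toReal|

/-- The coupling (Kantorovich) distance associated to a bounded metric `d`:
the infimum of `∫ d(x,y) λ(dx,dy)` over all couplings `λ` of `μ` and `ν`. -/
noncomputable def couplingDist {α : Type*} [MeasurableSpace α]
    (d : α → α → ℝ) (μ ν : Measure α) : ℝ :=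
  ⨅ π : {π : Measure (α × α) // π.map Prod.fst = μ ∧ π.map Prod.snd = ν},
    ∫ z, d z.1 z.2 ∂(π : Measure (α × α))

/-!
Fix `x ≠ y` with `N ‖x - y‖ ^ γ < 1`; for `N` large this forces `s = ‖x - y‖` below `υ` and
below the scale where `p s ≤ (θ₁ - θ ^ γ) s ^ γ / 2`. Take the joint law of `(ξ, η)`, keep the
part of it whose second marginal lies under the common part of `Law η` and `μ y` (mass
`≥ 1 - C s ^ γ`), and complete it by an independent coupling of the residual masses: this is a
coupling of `μ x` and `μ y`. On it `d_{N,γ}` is at most `N (θ s) ^ γ` where `ξ, η` are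
`θ s`-close and at most `1` elsewhere, so the coupling distance is at most
`(N θ ^ γ + p s / s ^ γ + C) s ^ γ`, which is `≤ θ₁ N s ^ γ` as soon as `N ≥ 2C / (θ₁ - θ ^ γ)`.
-/

open scoped ENNReal Topology

lemma integrable_of_nonneg_of_le_one {X : Type*} [MeasurableSpace X] {f : X → ℝ}
    (hf : Measurable f) (hf0 : 0 ≤ f) (hf1 : f ≤ 1) (μ : Measure X) [IsFiniteMeasure μ] :
    Integrable f μ :=
  Integrable.of_bound hf.aestronglyMeasurable 1 (Filter.Eventually.of_forall fun z => by
    rw [Real.norm_eq_abs, abs_of_nonneg (hf0 z)]; exact hf1 z)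

lemma integral_le_add_measureReal {Ω : Type*} [MeasurableSpace Ω] {P : Measure Ω}
    [IsProbabilityMeasure P] {f : Ω → ℝ} (hf : Measurable f) (hf0 : 0 ≤ f) (hf1 : f ≤ 1)
    {S : Set Ω} (hS : MeasurableSet S) {a : ℝ} (ha : 0 ≤ a) (hfa : ∀ ω ∉ S, f ω ≤ a) :
    ∫ ω, f ω ∂P ≤ a + P.real S := by
  have hbound : ∀ ω, f ω ≤ a + S.indicator 1 ω := fun ω => by
    by_cases hω : ω ∈ S
    · simp only [indicator_of_mem hω, Pi.one_apply]; linarith [show f ω ≤ 1 from hf1 ω]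
    · simp only [indicator_of_notMem hω, add_zero]; exact hfa ω hω
  have hind : Integrable (S.indicator 1) P := (integrable_const (1 : ℝ)).indicator hS
  calc ∫ ω, f ω ∂P ≤ ∫ ω, (a + S.indicator 1 ω) ∂P :=
        integral_mono (integrable_of_nonneg_of_le_one hf hf0 hf1 P)
          ((integrable_const a).add hind) hbound
    _ = a + P.real S := by
        rw [integral_add (integrable_const a) hind, integral_indicator_one hS]
        simp

section Couplings

variable {α β : Type*} [MeasurableSpace α] [MeasurableSpace β]

lemma couplingDist_le_integral {d : α → α → ℝ} (hd : ∀ a b, 0 ≤ d a b) {μ ν : Measure α}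
    (π : Measure (α × α)) (h₁ : π.map Prod.fst = μ) (h₂ : π.map Prod.snd = ν) :
    couplingDist d μ ν ≤ ∫ z, d z.1 z.2 ∂π := by
  unfold couplingDist
  refine ciInf_le ⟨0, ?_⟩
    (⟨π, h₁, h₂⟩ : {π : Measure (α × α) // π.map Prod.fst = μ ∧ π.map Prod.snd = ν})
  rintro _ ⟨π', rfl⟩
  exact integral_nonneg fun z => hd z.1 z.2

lemma couplingDist_self {d : α → α → ℝ} (hd : ∀ a b, 0 ≤ d a b) (hdiag : ∀ a, d a a = 0)
    (hdm : Measurable (Function.uncurry d)) (μ : Measure α) : couplingDist d μ μ = 0 := by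
  have hdiagm : Measurable fun a : α => (a, a) := measurable_id.prodMk measurable_id
  refine le_antisymm ?_ (Real.iInf_nonneg fun π => integral_nonneg fun z => hd z.1 z.2)
  calc couplingDist d μ μ ≤ ∫ z, d z.1 z.2 ∂(μ.map fun a => (a, a)) :=
        couplingDist_le_integral hd _
          (by rw [Measure.map_map measurable_fst hdiagm]; exact Measure.map_id)
          (by rw [Measure.map_map measurable_snd hdiagm]; exact Measure.map_id)
    _ = 0 := by
        rw [integral_map (f := fun z : α × α => d z.1 z.2) hdiagm.aemeasurable
          hdm.aestronglyMeasurable]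
        simp [hdiag]

lemma abs_measureReal_sub_le_tvDist (ν ν' : Measure α) [IsFiniteMeasure ν] [IsFiniteMeasure ν']
    {s : Set α} (hs : MeasurableSet s) : |ν.real s - ν'.real s| ≤ tvDist ν ν' := by
  unfold tvDist
  refine le_ciSup (f := fun t : {s : Set α // MeasurableSet s} => |ν.real t - ν'.real t|)
    ⟨ν.real univ + ν'.real univ, ?_⟩ (⟨s, hs⟩ : {s : Set α // MeasurableSet s})
  rintro _ ⟨t, rfl⟩
  have h₁ : ν.real t ≤ ν.real univ := measureReal_mono (subset_univ _)
  have h₂ : ν'.real t ≤ ν'.real univ := measureReal_mono (subset_univ _)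
  exact abs_sub_le_iff.2 ⟨by linarith [measureReal_nonneg (μ := ν') (s := t)],
    by linarith [measureReal_nonneg (μ := ν) (s := t)]⟩

/-- The witness is the common part `ν ⊓ ν'`, read off a Hahn decomposition. -/
lemma exists_le_le_measureReal_univ_sub_le_tvDist (ν ν' : Measure α) [IsFiniteMeasure ν]
    [IsFiniteMeasure ν'] :
    ∃ ρ : Measure α, ρ ≤ ν ∧ ρ ≤ ν' ∧ ν'.real univ - ρ.real univ ≤ tvDist ν ν' := by
  obtain ⟨E, hE, hνE, hν'E⟩ := hahn_decomposition ν' ν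
  have split : ∀ (κ : Measure α) {t : Set α}, MeasurableSet t → κ (t ∩ E) + κ (t ∩ Eᶜ) = κ t :=
    fun κ t ht => by rw [← sdiff_eq]; exact measure_inter_add_sdiff t hE
  refine ⟨ν.restrict E + ν'.restrict Eᶜ, ?_, ?_, ?_⟩
  · refine Measure.le_iff.2 fun t ht => ?_
    rw [Measure.add_apply, Measure.restrict_apply ht, Measure.restrict_apply ht, ← split ν ht]
    exact add_le_add le_rfl (hν'E _ (ht.inter hE.compl) inter_subset_right)
  · refine Measure.le_iff.2 fun t ht => ?_
    rw [Measure.add_apply, Measure.restrict_apply ht, Measure.restrict_apply ht, ← split ν' ht]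
    exact add_le_add (hνE _ (ht.inter hE) inter_subset_right) le_rfl
  · have hsum : ν'.real univ = ν'.real E + ν'.real Eᶜ := by
      rw [measureReal_add_measureReal_compl hE]
    have hρ : (ν.restrict E + ν'.restrict Eᶜ).real univ = ν.real E + ν'.real Eᶜ := by
      simp [measureReal_def, ENNReal.toReal_add]
    rw [hsum, hρ]
    linarith [le_abs_self (ν'.real E - ν.real E), abs_sub_comm (ν'.real E) (ν.real E),
      abs_measureReal_sub_le_tvDist ν ν' hE]

lemma map_snd_withDensity_comp_snd (lam : Measure (α × β)) {g : β → ℝ≥0∞} (hg : Measurable g) :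
    (lam.withDensity fun z => g z.2).map Prod.snd = (lam.map Prod.snd).withDensity g := by
  ext t ht
  rw [Measure.map_apply measurable_snd ht, withDensity_apply _ (measurable_snd ht),
    withDensity_apply _ ht, setLIntegral_map ht hg measurable_snd]

/-- Reweight `lam` by the Radon–Nikodym derivative `dρ/d(lam.map snd) ≤ 1` of the second
coordinate. -/
lemma exists_le_map_snd_eq_of_le (lam : Measure (α × β)) [IsFiniteMeasure lam] {ρ : Measure β}
    (hρ : ρ ≤ lam.map Prod.snd) : ∃ lam' ≤ lam, lam'.map Prod.snd = ρ := by
  have : IsFiniteMeasure ρ := isFiniteMeasure_of_le _ hρ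
  set g := ρ.rnDeriv (lam.map Prod.snd)
  have hg : Measurable g := Measure.measurable_rnDeriv _ _
  refine ⟨lam.withDensity fun z => g z.2, Measure.le_iff.2 fun t ht => ?_, ?_⟩
  · have hg1 : ∀ᵐ z ∂lam, g z.2 ≤ 1 :=
      ae_of_ae_map measurable_snd.aemeasurable (Measure.rnDeriv_le_one_of_le hρ)
    rw [withDensity_apply _ ht]
    calc ∫⁻ z in t, g z.2 ∂lam ≤ ∫⁻ _ in t, 1 ∂lam := lintegral_mono_ae (ae_restrict_of_ae hg1)
      _ = lam t := setLIntegral_one t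
  · rw [map_snd_withDensity_comp_snd _ hg,
      Measure.withDensity_rnDeriv_eq _ _ (Measure.absolutelyContinuous_of_le hρ)]

lemma exists_coupling_of_measure_univ_eq (τ₁ : Measure α) (τ₂ : Measure β) [IsFiniteMeasure τ₁]
    [IsFiniteMeasure τ₂] (h : τ₁ univ = τ₂ univ) :
    ∃ κ : Measure (α × β), κ.map Prod.fst = τ₁ ∧ κ.map Prod.snd = τ₂ := by
  rcases eq_or_ne (τ₁ univ) 0 with h0 | h0
  · have h0' : τ₂ univ = 0 := h ▸ h0
    rw [Measure.measure_univ_eq_zero] at h0 h0'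
    exact ⟨0, by rw [Measure.map_zero, h0], by rw [Measure.map_zero, h0']⟩
  refine ⟨(τ₁ univ)⁻¹ • τ₁.prod τ₂, ?_, ?_⟩
  · rw [Measure.map_smul, Measure.map_fst_prod, ← h, smul_smul,
      ENNReal.inv_mul_cancel h0 (measure_ne_top _ _), one_smul]
  · rw [Measure.map_smul, Measure.map_snd_prod, smul_smul,
      ENNReal.inv_mul_cancel h0 (measure_ne_top _ _), one_smul]

lemma measure_univ_map_snd (κ : Measure (α × β)) : κ.map Prod.snd univ = κ univ := by
  rw [Measure.map_apply measurable_snd MeasurableSet.univ, preimage_univ]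

lemma measure_univ_map_fst (κ : Measure (α × β)) : κ.map Prod.fst univ = κ univ := by
  rw [Measure.map_apply measurable_fst MeasurableSet.univ, preimage_univ]

lemma exists_add_map_eq_of_map_le (lam' : Measure (α × β)) [IsFiniteMeasure lam']
    {μ₁ : Measure α} {μ₂ : Measure β} [IsFiniteMeasure μ₁] [IsFiniteMeasure μ₂]
    (h : μ₁ univ = μ₂ univ) (h₁ : lam'.map Prod.fst ≤ μ₁) (h₂ : lam'.map Prod.snd ≤ μ₂) :
    ∃ κ : Measure (α × β), (lam' + κ).map Prod.fst = μ₁ ∧ (lam' + κ).map Prod.snd = μ₂ ∧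
      κ univ = μ₂ univ - lam' univ := by
  have hτ₁ : (μ₁ - lam'.map Prod.fst) univ = μ₁ univ - lam' univ := by
    rw [Measure.sub_apply MeasurableSet.univ h₁, measure_univ_map_fst]
  have hτ₂ : (μ₂ - lam'.map Prod.snd) univ = μ₂ univ - lam' univ := by
    rw [Measure.sub_apply MeasurableSet.univ h₂, measure_univ_map_snd]
  obtain ⟨κ, hκ₁, hκ₂⟩ := exists_coupling_of_measure_univ_eq (μ₁ - lam'.map Prod.fst)
    (μ₂ - lam'.map Prod.snd) (by rw [hτ₁, hτ₂, h])
  refine ⟨κ, ?_, ?_, ?_⟩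
  · rw [Measure.map_add _ _ measurable_fst, hκ₁, add_comm, Measure.sub_add_cancel_of_le h₁]
  · rw [Measure.map_add _ _ measurable_snd, hκ₂, add_comm, Measure.sub_add_cancel_of_le h₂]
  · rw [← measure_univ_map_snd, hκ₂, hτ₂]

lemma integral_add_measure_le_of_le {X : Type*} [MeasurableSpace X] {f : X → ℝ}
    (hf : Measurable f) (hf0 : 0 ≤ f) (hf1 : f ≤ 1) {lam' lam κ : Measure X} [IsFiniteMeasure lam]
    [IsFiniteMeasure κ] (hle : lam' ≤ lam) :
    ∫ z, f z ∂(lam' + κ) ≤ ∫ z, f z ∂lam + κ.real univ := by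
  have : IsFiniteMeasure lam' := isFiniteMeasure_of_le lam hle
  have hint := integrable_of_nonneg_of_le_one hf hf0 hf1
  rw [integral_add_measure (hint lam') (hint κ)]
  refine add_le_add (integral_mono_measure hle (Filter.Eventually.of_forall hf0) (hint lam)) ?_
  calc ∫ z, f z ∂κ ≤ ∫ _, (1 : ℝ) ∂κ := integral_mono (hint κ) (integrable_const 1) hf1
    _ = κ.real univ := by simp

theorem exists_coupling_integral_le_add_tvDist (lam : Measure (α × β)) [IsProbabilityMeasure lam]
    (ν : Measure β) [IsProbabilityMeasure ν] :
    ∃ π : Measure (α × β), π.map Prod.fst = lam.map Prod.fst ∧ π.map Prod.snd = ν ∧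
      ∀ f : α × β → ℝ, Measurable f → 0 ≤ f → f ≤ 1 →
        ∫ z, f z ∂π ≤ ∫ z, f z ∂lam + tvDist (lam.map Prod.snd) ν := by
  obtain ⟨ρ, hρ, hρν, hmass⟩ := exists_le_le_measureReal_univ_sub_le_tvDist (lam.map Prod.snd) ν
  obtain ⟨lam', hle, hlam'⟩ := exists_le_map_snd_eq_of_le lam hρ
  have : IsFiniteMeasure lam' := isFiniteMeasure_of_le lam hle
  obtain ⟨κ, h₁, h₂, hκ⟩ := exists_add_map_eq_of_map_le lam' (μ₁ := lam.map Prod.fst) (μ₂ := ν)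
    (by rw [measure_univ_map_fst, measure_univ, measure_univ])
    (Measure.map_mono hle measurable_fst) (hlam' ▸ hρν)
  have : IsFiniteMeasure κ := ⟨by rw [hκ]; exact tsub_le_self.trans_lt (measure_lt_top ν univ)⟩
  have hκ_real : κ.real univ = ν.real univ - ρ.real univ := by
    rw [measureReal_def, hκ, ← measure_univ_map_snd lam', hlam',
      ENNReal.toReal_sub_of_le (Measure.le_iff'.1 hρν univ) (measure_ne_top _ _)]
    rfl
  refine ⟨lam' + κ, h₁, h₂, fun f hf hf0 hf1 => ?_⟩
  calc ∫ z, f z ∂(lam' + κ) ≤ ∫ z, f z ∂lam + κ.real univ :=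
        integral_add_measure_le_of_le hf hf0 hf1 hle
    _ ≤ ∫ z, f z ∂lam + tvDist (lam.map Prod.snd) ν := by rw [hκ_real]; gcongr

end Couplings

section Metric

variable {E : Type*} [NormedAddCommGroup E] {N γ : ℝ}

lemma dNg_nonneg (hN : 0 ≤ N) (x y : E) : 0 ≤ dNg N γ x y :=
  le_min (mul_nonneg hN (Real.rpow_nonneg (norm_nonneg _) _)) zero_le_one

lemma dNg_le_one (x y : E) : dNg N γ x y ≤ 1 := min_le_right _ _

lemma dNg_self (hγ : γ ≠ 0) (x : E) : dNg N γ x x = 0 := by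
  simp [dNg, Real.zero_rpow hγ]

lemma dNg_le_of_norm_sub_le (hN : 0 ≤ N) (hγ : 0 ≤ γ) {x y : E} {a : ℝ} (h : ‖x - y‖ ≤ a) :
    dNg N γ x y ≤ N * a ^ γ :=
  (min_le_left _ _).trans (by gcongr)

lemma dNg_eq_of_lt_one {x y : E} (h : dNg N γ x y < 1) : dNg N γ x y = N * ‖x - y‖ ^ γ :=
  min_eq_left ((min_lt_iff.1 h).resolve_right (lt_irrefl 1)).le

lemma norm_sub_lt_of_dNg_lt_one (hγ : 0 < γ) {m : ℝ} (hm : 0 < m) (hN : (m ^ γ)⁻¹ ≤ N)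
    {x y : E} (h : dNg N γ x y < 1) : ‖x - y‖ < m := by
  have hmγ : 0 < m ^ γ := Real.rpow_pos_of_pos hm γ
  rw [dNg_eq_of_lt_one h] at h
  have : (m ^ γ)⁻¹ * ‖x - y‖ ^ γ < 1 :=
    (mul_le_mul_of_nonneg_right hN (Real.rpow_nonneg (norm_nonneg _) _)).trans_lt h
  rw [inv_mul_lt_iff₀ hmγ, mul_one] at this
  exact (Real.rpow_lt_rpow_iff (norm_nonneg _) hm.le hγ).1 this

lemma continuous_dNg (hγ : 0 ≤ γ) : Continuous fun z : E × E => dNg N γ z.1 z.2 :=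
  (continuous_const.mul ((continuous_fst.sub continuous_snd).norm.rpow_const
    fun _ => Or.inr hγ)).min continuous_const

end Metric

lemma exists_pos_forall_le_mul_rpow {p : ℝ → ℝ} {γ : ℝ}
    (hp : Filter.Tendsto (fun s => p s / s ^ γ) (𝓝[>] 0) (𝓝 0)) {ε : ℝ} (hε : 0 < ε) :
    ∃ δ > 0, ∀ s, 0 < s → s < δ → p s ≤ ε * s ^ γ := by
  obtain ⟨δ, hδ, hsub⟩ := mem_nhdsGT_iff_exists_Ioo_subset.1 (hp.eventually (gt_mem_nhds hε))
  refine ⟨δ, hδ, fun s hs hsδ => ?_⟩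
  have : p s / s ^ γ < ε := hsub ⟨hs, hsδ⟩
  exact ((div_lt_iff₀ (Real.rpow_pos_of_pos hs γ)).1 this).le

theorem couplingDist_dNg_le {E : Type*} [NormedAddCommGroup E] [MeasurableSpace E] [BorelSpace E]
    [SecondCountableTopology E] {Ω : Type*} [MeasurableSpace Ω] (P : Measure Ω)
    [IsProbabilityMeasure P] {ξ η : Ω → E} (hξ : Measurable ξ) (hη : Measurable η)
    {μ₁ μ₂ : Measure E} [IsProbabilityMeasure μ₂] (hlaw : P.map ξ = μ₁) {N γ a : ℝ}
    (hN : 0 ≤ N) (hγ : 0 ≤ γ) (ha : 0 ≤ a) :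
    couplingDist (dNg N γ) μ₁ μ₂ ≤
      N * a ^ γ + P.real {ω | a < ‖ξ ω - η ω‖} + tvDist (P.map η) μ₂ := by
  have hpair : Measurable fun ω => (ξ ω, η ω) := hξ.prodMk hη
  have : IsProbabilityMeasure (P.map fun ω => (ξ ω, η ω)) :=
    Measure.isProbabilityMeasure_map hpair.aemeasurable
  have hd := (continuous_dNg (E := E) (N := N) hγ).measurable
  obtain ⟨π, h₁, h₂, hπ⟩ := exists_coupling_integral_le_add_tvDist (P.map fun ω => (ξ ω, η ω)) μ₂
  rw [Measure.map_map measurable_fst hpair] at h₁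
  rw [Measure.map_map measurable_snd hpair] at hπ
  calc couplingDist (dNg N γ) μ₁ μ₂ ≤ ∫ z, dNg N γ z.1 z.2 ∂π :=
        couplingDist_le_integral (dNg_nonneg hN) π (h₁.trans hlaw) h₂
    _ ≤ ∫ z, dNg N γ z.1 z.2 ∂(P.map fun ω => (ξ ω, η ω)) + tvDist (P.map η) μ₂ :=
        hπ _ hd (fun z => dNg_nonneg hN _ _) (fun z => dNg_le_one _ _)
    _ ≤ N * a ^ γ + P.real {ω | a < ‖ξ ω - η ω‖} + tvDist (P.map η) μ₂ := by
        rw [integral_map hpair.aemeasurable hd.aestronglyMeasurable]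
        gcongr
        exact integral_le_add_measureReal (hd.comp hpair) (fun ω => dNg_nonneg hN _ _)
          (fun ω => dNg_le_one _ _) (measurableSet_lt measurable_const (hξ.sub hη).norm)
          (mul_nonneg hN (Real.rpow_nonneg ha _))
          fun ω hω => dNg_le_of_norm_sub_le hN hγ (not_lt.1 hω)

theorem generalized_coupling_contraction_general
    (r : ℝ) (n : ℕ)
    (γ υ C θ : ℝ) (hγ : γ ∈ Set.Ioc (0:ℝ) 1) (hυ : 0 < υ)
    (hθ : θ ∈ Set.Ioo (0:ℝ) 1)
    (p : ℝ → ℝ)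
    (hplim : Filter.Tendsto (fun s => p s / s ^ γ) (nhdsWithin 0 (Set.Ioi 0)) (nhds 0))
    {Ω : Type} [MeasurableSpace Ω]
    (P : PathSpace r n → PathSpace r n → Measure Ω)
    (hP : ∀ x y, IsProbabilityMeasure (P x y))
    (μ : PathSpace r n → Measure (PathSpace r n))
    (hμ : ∀ x, IsProbabilityMeasure (μ x))
    (ξ η : PathSpace r n → PathSpace r n → Ω → PathSpace r n)
    (hξm : ∀ x y, Measurable (ξ x y)) (hηm : ∀ x y, Measurable (η x y))
    (hlaw : ∀ x y, (P x y).map (ξ x y) = μ x)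
    (htv : ∀ x y : PathSpace r n, ‖x - y‖ ≤ υ →
      tvDist ((P x y).map (η x y)) (μ y) ≤ C * ‖x - y‖ ^ γ)
    (hclose : ∀ x y : PathSpace r n, ‖x - y‖ ≤ υ →
      ((P x y) {ω | θ * ‖x - y‖ < ‖ξ x y ω - η x y ω‖}).toReal ≤ p ‖x - y‖) :
    ∀ θ₁ ∈ Set.Ioo (θ ^ γ) 1, ∃ N₀ : ℝ, ∀ N ≥ N₀, ∀ x y : PathSpace r n,
      dNg N γ x y < 1 → couplingDist (dNg N γ) (μ x) (μ y) ≤ θ₁ * dNg N γ x y := by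
  intro θ₁ hθ₁
  have hε : 0 < θ₁ - θ ^ γ := sub_pos.2 hθ₁.1
  obtain ⟨δ, hδ, hpδ⟩ := exists_pos_forall_le_mul_rpow hplim (half_pos hε)
  refine ⟨max (max 1 (2 * C / (θ₁ - θ ^ γ))) (min δ υ ^ γ)⁻¹, fun N hN x y hxy => ?_⟩
  have hN1 : 1 ≤ N := le_of_max_le_left (le_of_max_le_left hN)
  have hCN : C ≤ (θ₁ - θ ^ γ) / 2 * N := by
    have := le_of_max_le_right (le_of_max_le_left hN)
    rw [div_le_iff₀ hε] at this
    linarith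
  have := hμ y
  have := hP x y
  rcases eq_or_ne x y with rfl | hne
  · rw [dNg_self hγ.1.ne', mul_zero, couplingDist_self (dNg_nonneg (by linarith))
      (dNg_self hγ.1.ne') (continuous_dNg hγ.1.le).measurable]
  have hs := norm_sub_lt_of_dNg_lt_one hγ.1 (lt_min hδ hυ) (le_of_max_le_right hN) hxy
  have hs0 : 0 < ‖x - y‖ := norm_sub_pos_iff.2 hne
  have hsυ : ‖x - y‖ ≤ υ := (hs.trans_le (min_le_right _ _)).le
  have hsγ : 0 ≤ ‖x - y‖ ^ γ := Real.rpow_nonneg hs0.le γ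
  calc couplingDist (dNg N γ) (μ x) (μ y)
      ≤ N * (θ * ‖x - y‖) ^ γ + (P x y).real {ω | θ * ‖x - y‖ < ‖ξ x y ω - η x y ω‖}
          + tvDist ((P x y).map (η x y)) (μ y) :=
        couplingDist_dNg_le (P x y) (hξm x y) (hηm x y) (hlaw x y) (by linarith) hγ.1.le
          (mul_nonneg hθ.1.le hs0.le)
    _ ≤ N * (θ ^ γ * ‖x - y‖ ^ γ) + (θ₁ - θ ^ γ) / 2 * ‖x - y‖ ^ γ + C * ‖x - y‖ ^ γ := by
        rw [Real.mul_rpow hθ.1.le hs0.le]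
        gcongr
        · exact (hclose x y hsυ).trans (hpδ _ hs0 (hs.trans_le (min_le_left _ _)))
        · exact htv x y hsυ
    _ ≤ θ₁ * (N * ‖x - y‖ ^ γ) := by
        nlinarith [mul_le_mul_of_nonneg_right hCN hsγ, mul_le_mul_of_nonneg_right hN1 hsγ]
    _ = θ₁ * dNg N γ x y := by rw [dNg_eq_of_lt_one hxy]

/-- Generalized coupling contraction proposition: if for each pair `x,y` there is a
generalized coupling `(ξ^{x,y}, η^{x,y})` with `Law(ξ^{x,y}) = μ^x`, whose second component
is `C‖x−y‖^γ`-close in total variation to `μ^y`, and whose components are `θ`-contracted with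
probability at least `1 − p(‖x−y‖)`, then for every `θ₁ ∈ (θ^γ, 1)` there is `N₀` such that
for all `N ≥ N₀` the coupling distance `d_{N,γ}` contracts by the factor `θ₁` on the set
`{(x,y) : d_{N,γ}(x,y) < 1}`. -/
theorem generalized_coupling_contraction
    (r : ℝ) (hr : 0 < r) (n : ℕ)
    (γ υ C θ : ℝ) (hγ : γ ∈ Set.Ioc (0:ℝ) 1) (hυ : 0 < υ) (hC : 0 < C)
    (hθ : θ ∈ Set.Ioo (0:ℝ) 1)
    (p : ℝ → ℝ) (hp01 : ∀ s : ℝ, 0 < s → p s ∈ Set.Icc (0:ℝ) 1)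
    (hplim : Filter.Tendsto (fun s => p s / s ^ γ) (nhdsWithin 0 (Set.Ioi 0)) (nhds 0))
    {Ω : Type} [MeasurableSpace Ω]
    (P : PathSpace r n → PathSpace r n → Measure Ω)
    (hP : ∀ x y, IsProbabilityMeasure (P x y))
    (μ : PathSpace r n → Measure (PathSpace r n))
    (hμ : ∀ x, IsProbabilityMeasure (μ x))
    (ξ η : PathSpace r n → PathSpace r n → Ω → PathSpace r n)
    (hξm : ∀ x y, Measurable (ξ x y)) (hηm : ∀ x y, Measurable (η x y))
    (hlaw : ∀ x y, (P x y).map (ξ x y) = μ x)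
    (htv : ∀ x y : PathSpace r n, ‖x - y‖ ≤ υ →
      tvDist ((P x y).map (η x y)) (μ y) ≤ C * ‖x - y‖ ^ γ)
    (hclose : ∀ x y : PathSpace r n, ‖x - y‖ ≤ υ →
      ((P x y) {ω | θ * ‖x - y‖ < ‖ξ x y ω - η x y ω‖}).toReal ≤ p ‖x - y‖) :
    ∀ θ₁ ∈ Set.Ioo (θ ^ γ) 1, ∃ N₀ : ℝ, ∀ N ≥ N₀, ∀ x y : PathSpace r n,
      dNg N γ x y < 1 → couplingDist (dNg N γ) (μ x) (μ y) ≤ θ₁ * dNg N γ x y :=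
  generalized_coupling_contraction_general r n γ υ C θ hγ hυ hθ p hplim P hP μ hμ ξ η hξm hηm hlaw
    htv hclose
end

section
/- Let μ and ν be probability measures on a measurable space (X, 𝒳) with μ absolutely continuous with respect to ν. Then for every N > 1 and every measurable set A ∈ 𝒳, one has ν(A) ≥ (1/N) μ(A) − (D_KL(μ‖ν) + log 2)/(N log N). -/
/-!
Split `A` along the level set `S = {dμ/dν ≤ N}`. On `S` the density is at most `N`, so
`μ(A ∩ S) ≤ N ν(A)`. Off `S` the log-likelihood ratio exceeds `log N`, while on `S` its
`μ`-integral equals `∫_S r log r dν ≥ -e⁻¹`; hence `μ(Sᶜ) log N ≤ D_KL(μ‖ν) + e⁻¹`, and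
`e⁻¹ < 1/2 < log 2`.
-/

open MeasureTheory Set

namespace Real

lemma neg_exp_neg_one_le_mul_log {x : ℝ} (hx : 0 ≤ x) : -exp (-1) ≤ x * log x := by
  rcases hx.eq_or_lt with rfl | hx
  · simp [(exp_pos _).le]
  -- the tangent line `y - 1 ≤ y log y` at `y = e x`
  have htangent := self_sub_one_le_mul_log (mul_pos (exp_pos 1) hx).le
  rw [log_mul (exp_pos 1).ne' hx.ne', log_exp] at htangent
  have hexp : exp (-1) * exp 1 = 1 := by rw [← exp_add]; simp
  nlinarith [exp_pos (-1)]

end Real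

namespace MeasureTheory

variable {X : Type*} [MeasurableSpace X] {μ ν : Measure X}

lemma measureReal_inter_rnDeriv_le_le_mul [IsFiniteMeasure μ] [IsFiniteMeasure ν] (hμν : μ ≪ ν)
    {A : Set X} (hA : MeasurableSet A) {N : ℝ} (hN : 0 ≤ N) :
    μ.real (A ∩ {x | (μ.rnDeriv ν x).toReal ≤ N}) ≤ N * ν.real A := by
  set S := A ∩ {x | (μ.rnDeriv ν x).toReal ≤ N}
  have hS : MeasurableSet S :=
    hA.inter (measurableSet_le (Measure.measurable_rnDeriv μ ν).ennreal_toReal measurable_const)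
  calc μ.real S = ∫ x in S, (μ.rnDeriv ν x).toReal ∂ν := (Measure.setIntegral_toReal_rnDeriv hμν S).symm
    _ ≤ ∫ _ in S, N ∂ν :=
      setIntegral_mono_on Measure.integrable_toReal_rnDeriv.integrableOn (integrableOn_const)
        hS fun _ hx ↦ hx.2
    _ = N * ν.real S := by rw [setIntegral_const, smul_eq_mul, mul_comm]
    _ ≤ N * ν.real A :=
      mul_le_mul_of_nonneg_left (measureReal_mono inter_subset_left) hN

lemma measureReal_rnDeriv_gt_mul_log_le [IsFiniteMeasure μ] [IsFiniteMeasure ν] (hμν : μ ≪ ν)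
    (hint : Integrable (llr μ ν) μ) {N : ℝ} (hN : 0 < N) :
    μ.real {x | N < (μ.rnDeriv ν x).toReal} * Real.log N
      ≤ ∫ x, llr μ ν x ∂μ + Real.exp (-1) * ν.real univ := by
  set S := {x | (μ.rnDeriv ν x).toReal ≤ N}
  have hS : MeasurableSet S :=
    measurableSet_le (Measure.measurable_rnDeriv μ ν).ennreal_toReal measurable_const
  have hSc : Sᶜ = {x | N < (μ.rnDeriv ν x).toReal} := by ext; simp [S]
  have hlow : -Real.exp (-1) * ν.real S ≤ ∫ x in S, llr μ ν x ∂μ := by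
    rw [← setIntegral_toReal_rnDeriv_mul hμν hS]
    exact setIntegral_ge_of_const_le_real hS (measure_ne_top _ _)
      (fun x _ ↦ Real.neg_exp_neg_one_le_mul_log ENNReal.toReal_nonneg)
      ((integrable_toReal_rnDeriv_mul_iff hμν).2 hint).integrableOn
  have hhigh : Real.log N * μ.real Sᶜ ≤ ∫ x in Sᶜ, llr μ ν x ∂μ :=
    setIntegral_ge_of_const_le_real hS.compl (measure_ne_top _ _)
      (fun x hx ↦ Real.log_le_log hN (le_of_lt (not_le.1 hx))) hint.integrableOn
  have hSuniv : Real.exp (-1) * ν.real S ≤ Real.exp (-1) * ν.real univ :=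
    mul_le_mul_of_nonneg_left (measureReal_mono (subset_univ S)) (Real.exp_pos _).le
  rw [← integral_add_compl hS hint, ← hSc]
  linarith

theorem measureReal_le_mul_add_integral_llr_div_log [IsFiniteMeasure μ] [IsFiniteMeasure ν]
    (hμν : μ ≪ ν) (hint : Integrable (llr μ ν) μ) {A : Set X} (hA : MeasurableSet A)
    {N : ℝ} (hN : 1 < N) :
    μ.real A ≤ N * ν.real A + (∫ x, llr μ ν x ∂μ + Real.exp (-1) * ν.real univ) / Real.log N := by
  have hbulk := measureReal_inter_rnDeriv_le_le_mul hμν hA (by linarith : 0 ≤ N)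
  have htail := measureReal_rnDeriv_gt_mul_log_le hμν hint (by linarith : 0 < N)
  have hcover : A ⊆ (A ∩ {x | (μ.rnDeriv ν x).toReal ≤ N}) ∪ {x | N < (μ.rnDeriv ν x).toReal} :=
    fun x hx ↦ (le_or_gt _ N).imp (fun h ↦ ⟨hx, h⟩) id
  have hsplit := (measureReal_mono (μ := μ) hcover).trans (measureReal_union_le _ _)
  rw [← le_div_iff₀ (Real.log_pos hN)] at htail
  linarith

end MeasureTheory

/-- Kullback–Leibler lower bound: for probability measures `μ ≪ ν` with
`D_KL(μ‖ν) = ∫ log(dμ/dν) dμ` (assumed well defined, i.e. the log-likelihood ratio is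
`μ`-integrable), every `N > 1` and every measurable set `A` satisfy
`ν(A) ≥ (1/N) μ(A) − (D_KL(μ‖ν) + log 2)/(N log N)`. -/
theorem kl_lower_bound
    {X : Type*} [MeasurableSpace X] (μ ν : Measure X)
    [IsProbabilityMeasure μ] [IsProbabilityMeasure ν]
    (hac : μ ≪ ν)
    (hInt : Integrable (fun x => Real.log (μ.rnDeriv ν x).toReal) μ) :
    ∀ N : ℝ, 1 < N → ∀ A : Set X, MeasurableSet A →
      (1 / N) * (μ A).toReal -
        ((∫ x, Real.log (μ.rnDeriv ν x).toReal ∂μ) + Real.log 2) / (N * Real.log N)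
      ≤ (ν A).toReal := by
  intro N hN A hA
  have hmain := measureReal_le_mul_add_integral_llr_div_log hac hInt hA hN
  rw [probReal_univ, mul_one] at hmain
  have hlogN := Real.log_pos hN
  have hexp : Real.exp (-1) ≤ Real.log 2 := by
    linarith [Real.exp_neg_one_lt_half, Real.log_two_gt_d9]
  have hweaken : (∫ x, llr μ ν x ∂μ + Real.exp (-1)) / Real.log N
      ≤ (∫ x, llr μ ν x ∂μ + Real.log 2) / Real.log N := by gcongr
  calc (1 / N) * μ.real A - (∫ x, llr μ ν x ∂μ + Real.log 2) / (N * Real.log N)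
      = (μ.real A - (∫ x, llr μ ν x ∂μ + Real.log 2) / Real.log N) / N := by ring
    _ ≤ ν.real A := by
      rw [div_le_iff₀ (by linarith)]
      linarith
end

section
/- Let δ ∈ (0,1), λ > 0, N ≥ 0, T > 0, and let h : [0,T] → ℝ be a continuous function with h(0) = 0 satisfying the Hölder bound |h(t) − h(s)| ≤ N|t−s|^δ for all s, t ∈ [0,T]. Then for every t ∈ [0,T], ∫₀ᵗ (h(t) − h(s)) · λ e^{−λ(t−s)} ds + e^{−λt} h(t) ≤ N λ^{−δ} ( Γ(δ) + sup_{x>0} x^δ e^{−x} ), where Γ denotes the Gamma function. -/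
/-!
Since `h t - h s ≤ N (t - s)^δ`, the substitution `u = t - s` bounds the integral by
`N ∫₀^∞ u^δ λ e^{-λu} du = N λ^{-δ} Γ(δ + 1) ≤ N λ^{-δ} Γ(δ)`, while the boundary term is at most
`e^{-λt} N t^δ = N λ^{-δ} (λt)^δ e^{-λt}`, which the supremum controls.
-/

open MeasureTheory Set Filter Topology

theorem continuousOn_of_dist_le_rpow {X Y : Type*} [PseudoMetricSpace X] [PseudoMetricSpace Y]
    {f : X → Y} {s : Set X} {N δ : ℝ} (hδ : 0 < δ)
    (hf : ∀ x ∈ s, ∀ y ∈ s, dist (f y) (f x) ≤ N * dist y x ^ δ) : ContinuousOn f s := by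
  intro x hx
  rw [ContinuousWithinAt, tendsto_iff_dist_tendsto_zero]
  refine squeeze_zero' (Eventually.of_forall fun _ ↦ dist_nonneg)
    (eventually_nhdsWithin_of_forall fun y hy ↦ hf x hx y hy) ?_
  have hlim : Tendsto (fun y ↦ N * dist y x ^ δ) (𝓝 x) (𝓝 (N * dist x x ^ δ)) :=
    (tendsto_const_nhds.mul ((continuous_id.dist continuous_const).rpow_const
      fun _ ↦ Or.inr hδ.le).continuousAt)
  rw [dist_self, Real.zero_rpow hδ.ne', mul_zero] at hlim
  exact hlim.mono_left nhdsWithin_le_nhds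

theorem Real.rpow_mul_exp_neg_le_one {δ x : ℝ} (hδ0 : 0 ≤ δ) (hδ1 : δ ≤ 1) (hx : 0 ≤ x) :
    x ^ δ * Real.exp (-x) ≤ 1 := by
  have hpow : x ^ δ ≤ x + 1 := by
    rcases le_total x 1 with hx1 | hx1
    · linarith [Real.rpow_le_one hx hx1 hδ0]
    · linarith [Real.rpow_le_self_of_one_le hx1 hδ1]
  rw [Real.exp_neg, mul_inv_le_iff₀ (Real.exp_pos x), one_mul]
  exact hpow.trans (Real.add_one_le_exp x)

theorem Real.rpow_mul_exp_neg_le_iSup {δ x : ℝ} (hδ0 : 0 < δ) (hδ1 : δ ≤ 1) (hx : 0 ≤ x) :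
    x ^ δ * Real.exp (-x) ≤ ⨆ y : {y : ℝ // 0 < y}, (y : ℝ) ^ δ * Real.exp (-(y : ℝ)) := by
  have hbdd : BddAbove (range fun y : {y : ℝ // 0 < y} ↦ (y : ℝ) ^ δ * Real.exp (-(y : ℝ))) :=
    ⟨1, forall_mem_range.2 fun y ↦ Real.rpow_mul_exp_neg_le_one hδ0.le hδ1 y.2.le⟩
  rcases hx.eq_or_lt with rfl | hx
  · rw [Real.zero_rpow hδ0.ne', zero_mul]
    exact (by positivity : (0 : ℝ) ≤ 1 ^ δ * Real.exp (-1)).trans (le_ciSup hbdd ⟨1, one_pos⟩)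
  · exact le_ciSup hbdd ⟨x, hx⟩

theorem Real.Gamma_add_one_le_Gamma {δ : ℝ} (hδ0 : 0 < δ) (hδ1 : δ ≤ 1) :
    Real.Gamma (δ + 1) ≤ Real.Gamma δ := by
  rw [Real.Gamma_add_one hδ0.ne']
  exact mul_le_of_le_one_left (Real.Gamma_pos_of_pos hδ0).le hδ1

theorem integral_rpow_mul_exp_neg_mul_le {δ lam t : ℝ} (hδ : -1 < δ) (hlam : 0 < lam)
    (ht : 0 ≤ t) :
    ∫ u in (0 : ℝ)..t, u ^ δ * (lam * Real.exp (-lam * u)) ≤ lam ^ (-δ) * Real.Gamma (δ + 1) := by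
  have hint : IntegrableOn (fun u : ℝ ↦ u ^ δ * Real.exp (-lam * u)) (Ioi 0) := by
    simpa using integrableOn_rpow_mul_exp_neg_mul_rpow hδ one_pos hlam
  have hGamma : ∫ u in Ioi (0 : ℝ), u ^ δ * Real.exp (-lam * u)
      = (1 / lam) ^ (δ + 1) * Real.Gamma (δ + 1) := by
    simpa using Real.integral_rpow_mul_exp_neg_mul_Ioi (a := δ + 1) (by linarith) hlam
  have hscale : lam * (1 / lam) ^ (δ + 1) = lam ^ (-δ) := by
    rw [one_div, Real.inv_rpow hlam.le, ← Real.rpow_neg hlam.le, neg_add, Real.rpow_add hlam,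
      Real.rpow_neg_one, mul_left_comm, mul_inv_cancel₀ hlam.ne', mul_one]
  calc ∫ u in (0 : ℝ)..t, u ^ δ * (lam * Real.exp (-lam * u))
      = lam * ∫ u in Ioc (0 : ℝ) t, u ^ δ * Real.exp (-lam * u) := by
        rw [intervalIntegral.integral_of_le ht, ← integral_const_mul]
        congr 1 with u
        ring
    _ ≤ lam * ∫ u in Ioi (0 : ℝ), u ^ δ * Real.exp (-lam * u) := by
        refine mul_le_mul_of_nonneg_left (setIntegral_mono_set hint ?_ ?_) hlam.le
        · filter_upwards [self_mem_ae_restrict measurableSet_Ioi] with u (hu : 0 < u)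
          positivity
        · exact Ioc_subset_Ioi_self.eventuallyLE
    _ = lam ^ (-δ) * Real.Gamma (δ + 1) := by rw [hGamma, ← mul_assoc, hscale]

theorem integral_sub_mul_exp_le_of_le_rpow {h : ℝ → ℝ} {δ lam N t : ℝ} (hδ : 0 ≤ δ)
    (hlam : 0 < lam) (hN : 0 ≤ N) (ht : 0 ≤ t) (hcont : ContinuousOn h (Icc 0 t))
    (hle : ∀ s ∈ Icc 0 t, h t - h s ≤ N * (t - s) ^ δ) :
    ∫ s in (0 : ℝ)..t, (h t - h s) * (lam * Real.exp (-lam * (t - s)))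
      ≤ N * lam ^ (-δ) * Real.Gamma (δ + 1) := by
  have hkernel : Continuous fun s : ℝ ↦ lam * Real.exp (-lam * (t - s)) := by fun_prop
  have hint : IntervalIntegrable (fun s ↦ (h t - h s) * (lam * Real.exp (-lam * (t - s))))
      volume 0 t := by
    refine ContinuousOn.intervalIntegrable ?_
    rw [uIcc_of_le ht]
    exact (continuousOn_const.sub hcont).mul hkernel.continuousOn
  have hint' : IntervalIntegrable (fun s ↦ N * (t - s) ^ δ * (lam * Real.exp (-lam * (t - s))))
      volume 0 t :=
    (((continuous_const.sub continuous_id).rpow_const fun _ ↦ Or.inr hδ).const_mul N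
      |>.mul hkernel).intervalIntegrable 0 t
  calc ∫ s in (0 : ℝ)..t, (h t - h s) * (lam * Real.exp (-lam * (t - s)))
      ≤ ∫ s in (0 : ℝ)..t, N * (t - s) ^ δ * (lam * Real.exp (-lam * (t - s))) :=
        intervalIntegral.integral_mono_on ht hint hint' fun s hs ↦
          mul_le_mul_of_nonneg_right (hle s hs) (by positivity)
    _ = N * ∫ u in (0 : ℝ)..t, u ^ δ * (lam * Real.exp (-lam * u)) := by
        rw [← intervalIntegral.integral_const_mul]
        simpa [mul_assoc] using intervalIntegral.integral_comp_sub_left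
          (fun u ↦ N * (u ^ δ * (lam * Real.exp (-lam * u)))) t (a := 0) (b := t)
    _ ≤ N * lam ^ (-δ) * Real.Gamma (δ + 1) := by
        rw [mul_assoc]
        exact mul_le_mul_of_nonneg_left
          (integral_rpow_mul_exp_neg_mul_le (by linarith) hlam ht) hN

theorem exp_neg_mul_mul_le_of_le_rpow {δ lam N t y : ℝ} (hδ0 : 0 < δ) (hδ1 : δ ≤ 1)
    (hlam : 0 < lam) (hN : 0 ≤ N) (ht : 0 ≤ t) (hy : y ≤ N * t ^ δ) :
    Real.exp (-lam * t) * y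
      ≤ N * lam ^ (-δ) * ⨆ x : {x : ℝ // 0 < x}, (x : ℝ) ^ δ * Real.exp (-(x : ℝ)) := by
  have hscale : Real.exp (-lam * t) * (N * t ^ δ)
      = N * lam ^ (-δ) * ((lam * t) ^ δ * Real.exp (-(lam * t))) := by
    rw [Real.mul_rpow hlam.le ht, Real.rpow_neg hlam.le, neg_mul]
    field_simp
  calc Real.exp (-lam * t) * y ≤ Real.exp (-lam * t) * (N * t ^ δ) := by gcongr
    _ = N * lam ^ (-δ) * ((lam * t) ^ δ * Real.exp (-(lam * t))) := hscale
    _ ≤ _ := by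
        gcongr
        exact Real.rpow_mul_exp_neg_le_iSup hδ0 hδ1 (by positivity)

theorem holder_exponential_convolution_bound_general
    (δ lam N T : ℝ) (hδ : δ ∈ Set.Ioo (0:ℝ) 1) (hlam : 0 < lam) (hN : 0 ≤ N)
    (h : ℝ → ℝ) (h0 : h 0 = 0)
    (hHolder : ∀ s ∈ Set.Icc (0:ℝ) T, ∀ t ∈ Set.Icc (0:ℝ) T,
      |h t - h s| ≤ N * |t - s| ^ δ) :
    ∀ t ∈ Set.Icc (0:ℝ) T,
      (∫ s in (0:ℝ)..t, (h t - h s) * (lam * Real.exp (-lam * (t - s))))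
          + Real.exp (-lam * t) * h t
        ≤ N * lam ^ (-δ) *
            (Real.Gamma δ + ⨆ x : {x : ℝ // 0 < x}, (x : ℝ) ^ δ * Real.exp (-(x : ℝ))) := by
  obtain ⟨hδ0, hδ1⟩ := hδ
  intro t ht
  have hsub : Icc 0 t ⊆ Icc 0 T := Icc_subset_Icc_right ht.2
  have hcont : ContinuousOn h (Icc 0 t) := continuousOn_of_dist_le_rpow hδ0 fun x hx y hy ↦ by
    simpa only [Real.dist_eq] using hHolder x (hsub hx) y (hsub hy)
  have hincr : ∀ s ∈ Icc 0 t, h t - h s ≤ N * (t - s) ^ δ := fun s hs ↦ by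
    simpa [abs_of_nonneg (sub_nonneg.2 hs.2)] using
      (le_abs_self _).trans (hHolder s (hsub hs) t ht)
  have hbdry : h t ≤ N * t ^ δ := by
    simpa [h0, abs_of_nonneg ht.1] using
      (le_abs_self _).trans (hHolder 0 ⟨le_rfl, ht.1.trans ht.2⟩ t ht)
  calc _ ≤ N * lam ^ (-δ) * Real.Gamma (δ + 1)
        + N * lam ^ (-δ) * ⨆ x : {x : ℝ // 0 < x}, (x : ℝ) ^ δ * Real.exp (-(x : ℝ)) :=
        add_le_add (integral_sub_mul_exp_le_of_le_rpow hδ0.le hlam hN ht.1 hcont hincr)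
          (exp_neg_mul_mul_le_of_le_rpow hδ0 hδ1.le hlam hN ht.1 hbdry)
    _ ≤ N * lam ^ (-δ) * Real.Gamma δ
        + N * lam ^ (-δ) * ⨆ x : {x : ℝ // 0 < x}, (x : ℝ) ^ δ * Real.exp (-(x : ℝ)) := by
        gcongr
        exact Real.Gamma_add_one_le_Gamma hδ0 hδ1.le
    _ = _ := by ring

/-- Deterministic convolution estimate for Hölder functions: if `h` is continuous on `[0,T]`
with `h(0) = 0` and `|h(t) − h(s)| ≤ N|t−s|^δ` on `[0,T]`, then for every `t ∈ [0,T]`,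
`∫₀ᵗ (h(t) − h(s)) λ e^{−λ(t−s)} ds + e^{−λt} h(t) ≤ N λ^{−δ} (Γ(δ) + sup_{x>0} x^δ e^{−x})`. -/
theorem holder_exponential_convolution_bound
    (δ lam N T : ℝ) (hδ : δ ∈ Set.Ioo (0:ℝ) 1) (hlam : 0 < lam) (hN : 0 ≤ N) (hT : 0 < T)
    (h : ℝ → ℝ) (hcont : ContinuousOn h (Set.Icc 0 T)) (h0 : h 0 = 0)
    (hHolder : ∀ s ∈ Set.Icc (0:ℝ) T, ∀ t ∈ Set.Icc (0:ℝ) T,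
      |h t - h s| ≤ N * |t - s| ^ δ) :
    ∀ t ∈ Set.Icc (0:ℝ) T,
      (∫ s in (0:ℝ)..t, (h t - h s) * (lam * Real.exp (-lam * (t - s))))
          + Real.exp (-lam * t) * h t
        ≤ N * lam ^ (-δ) *
            (Real.Gamma δ + ⨆ x : {x : ℝ // 0 < x}, (x : ℝ) ^ δ * Real.exp (-(x : ℝ))) :=
  holder_exponential_convolution_bound_general δ lam N T hδ hlam hN h h0 hHolder
end

section
/- Let (W_t)_{t≥0} be a standard one-dimensional Brownian motion, and fix δ ∈ (0,1/2) and T > 0. Then there exist constants c₁, c₂ > 0, depending only on δ and T, such that for every N > 0, P( there exist s, t ∈ [0,T] with |W_t − W_s| > N|t−s|^δ ) ≤ c₁ e^{−c₂ N²}. -/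
/-!
Chaining: if every increment of a continuous path over a dyadic interval of `[0, T]` of length
`h = T / 2 ^ n` is at most `c * h ^ δ`, then the path is `δ`-Hölder on `[0, T]` with constant
`K * c`, `K` depending only on `δ`. Hence a violation of the Hölder bound with constant `N`
forces some dyadic increment to exceed `(N / K) * h ^ δ`. That increment is `N(0, h)`, so the
Chernoff bound gives probability at most `2 * exp (-κ N² B ^ n)` with `κ > 0` depending on
`δ, T` and `B = 2 ^ (1 - 2δ) > 1`.
Since `B ^ n ≥ 1 + n (B - 1)`, this beats the `2 ^ n` increments of level `n` as soon as `κ N²`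
is large; for small `N` the probability is at most `1`.
-/

open MeasureTheory Set Filter Topology Real ProbabilityTheory
open scoped NNReal ENNReal

noncomputable def dyadicIndex (T : ℝ) (n : ℕ) (x : ℝ) : ℕ := ⌊x / (T / 2 ^ n)⌋₊

section DyadicIndex

variable {T x : ℝ}

lemma dyadicIndex_le (hT : 0 < T) (hx : x ≤ T) (n : ℕ) : dyadicIndex T n x ≤ 2 ^ n :=
  Nat.floor_le_of_le <| by
    rw [div_le_iff₀ (by positivity)]
    push_cast
    calc x ≤ T := hx
      _ = 2 ^ n * (T / 2 ^ n) := by field_simp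

lemma dyadicIndex_mono (hT : 0 < T) (n : ℕ) : Monotone (dyadicIndex T n) := fun _ _ h =>
  Nat.floor_mono (div_le_div_of_nonneg_right h (by positivity))

lemma dyadicIndex_succ_div_two (T : ℝ) (n : ℕ) (x : ℝ) :
    dyadicIndex T (n + 1) x / 2 = dyadicIndex T n x := by
  rw [dyadicIndex, dyadicIndex, ← Nat.floor_div_natCast]
  congr 1
  field_simp
  ring

lemma dyadicIndex_le_add_one (hT : 0 < T) {n : ℕ} {s t : ℝ} (hs : 0 ≤ s)
    (hst : t - s ≤ T / 2 ^ n) : dyadicIndex T n t ≤ dyadicIndex T n s + 1 := by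
  have hh : 0 < T / 2 ^ n := by positivity
  rw [dyadicIndex, dyadicIndex, ← Nat.floor_add_one (div_nonneg hs hh.le)]
  refine Nat.floor_mono ?_
  rw [div_add_one hh.ne', div_le_div_iff_of_pos_right hh]
  linarith

lemma dyadicIndex_mul_le (hT : 0 < T) (hx : 0 ≤ x) (n : ℕ) :
    dyadicIndex T n x * (T / 2 ^ n) ≤ x :=
  (le_div_iff₀ (by positivity)).1 (Nat.floor_le (by positivity))

lemma lt_dyadicIndex_mul_add (hT : 0 < T) (x : ℝ) (n : ℕ) :
    x < dyadicIndex T n x * (T / 2 ^ n) + T / 2 ^ n := by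
  rw [← add_one_mul, ← div_lt_iff₀ (by positivity)]
  exact Nat.lt_floor_add_one _

lemma dyadicIndex_mul_mem_Icc (hT : 0 < T) (hx : x ∈ Icc 0 T) (n : ℕ) :
    dyadicIndex T n x * (T / 2 ^ n) ∈ Icc 0 T :=
  ⟨by positivity, (dyadicIndex_mul_le hT hx.1 n).trans hx.2⟩

lemma tendsto_dyadicIndex_mul (hT : 0 < T) (hx : 0 ≤ x) :
    Tendsto (fun n => dyadicIndex T n x * (T / 2 ^ n)) atTop (𝓝 x) := by
  have hstep : Tendsto (fun n : ℕ => T / 2 ^ n) atTop (𝓝 0) :=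
    tendsto_const_nhds.div_atTop (tendsto_pow_atTop_atTop_of_one_lt one_lt_two)
  refine tendsto_of_tendsto_of_tendsto_of_le_of_le (g := fun n => x - T / 2 ^ n)
    (by simpa using tendsto_const_nhds.sub hstep) tendsto_const_nhds (fun n => ?_)
    (fun n => dyadicIndex_mul_le hT hx n)
  linarith [lt_dyadicIndex_mul_add hT x n]

end DyadicIndex

def DyadicHolderOn {E : Type*} [PseudoMetricSpace E] (T c δ : ℝ) (f : ℝ → E) : Prop :=
  ∀ n k : ℕ, k < 2 ^ n →
    dist (f ((k + 1) * (T / 2 ^ n))) (f (k * (T / 2 ^ n))) ≤ c * (T / 2 ^ n) ^ δ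

-- `2 ^ δ` compares the dyadic scale with `t - s`; `1 + 2 r / (1 - r)`, `r = 2 ^ (-δ)`, counts
-- one dyadic step between the two scale-`n` approximations plus the two geometric tails.
noncomputable def chainingConst (δ : ℝ) : ℝ :=
  2 ^ δ * (1 + 2 * ((1 / 2) ^ δ / (1 - (1 / 2) ^ δ)))

lemma chainingConst_pos {δ : ℝ} (hδ : 0 < δ) : 0 < chainingConst δ := by
  have hr : (1 / 2 : ℝ) ^ δ < 1 := rpow_lt_one (by norm_num) (by norm_num) hδ
  have : 0 ≤ (1 / 2 : ℝ) ^ δ / (1 - (1 / 2) ^ δ) := div_nonneg (by positivity) (by linarith)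
  unfold chainingConst
  positivity

lemma div_two_pow_rpow {T : ℝ} (hT : 0 ≤ T) (δ : ℝ) (n : ℕ) :
    (T / 2 ^ n) ^ δ = T ^ δ * ((1 / 2) ^ δ) ^ n := by
  rw [div_eq_mul_one_div, ← one_div_pow, mul_rpow hT (by positivity), ← rpow_natCast,
    ← rpow_natCast, ← rpow_mul (by norm_num), ← rpow_mul (by norm_num), mul_comm (n : ℝ) δ]

namespace DyadicHolderOn

variable {E : Type*} [PseudoMetricSpace E] {f : ℝ → E} {T c δ : ℝ}

lemma nonneg (hf : DyadicHolderOn T c δ f) (hT : 0 < T) : 0 ≤ c :=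
  nonneg_of_mul_nonneg_left (dist_nonneg.trans (hf 0 0 (by norm_num))) (by positivity)

lemma dist_le_of_le_of_le_succ (hf : DyadicHolderOn T c δ f) (hT : 0 < T) {n j k : ℕ}
    (hkj : k ≤ j) (hjk : j ≤ k + 1) (hj : j ≤ 2 ^ n) :
    dist (f (j * (T / 2 ^ n))) (f (k * (T / 2 ^ n))) ≤ c * (T / 2 ^ n) ^ δ := by
  obtain rfl | rfl : j = k ∨ j = k + 1 := by omega
  · rw [dist_self]
    exact mul_nonneg (hf.nonneg hT) (by positivity)
  · exact_mod_cast hf n k (by omega)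

lemma dist_dyadic_succ_le (hf : DyadicHolderOn T c δ f) (hT : 0 < T) {x : ℝ} (hx : x ≤ T)
    (n : ℕ) :
    dist (f (dyadicIndex T n x * (T / 2 ^ n))) (f (dyadicIndex T (n + 1) x * (T / 2 ^ (n + 1))))
      ≤ c * (T / 2 ^ (n + 1)) ^ δ := by
  have hdiv := dyadicIndex_succ_div_two T n x
  have hcoarse : (dyadicIndex T n x : ℝ) * (T / 2 ^ n)
      = ((2 * dyadicIndex T n x : ℕ) : ℝ) * (T / 2 ^ (n + 1)) := by
    push_cast
    field_simp
    ring
  rw [hcoarse, dist_comm]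
  exact hf.dist_le_of_le_of_le_succ hT (by omega) (by omega) (dyadicIndex_le hT hx _)

lemma dist_dyadic_le (hf : DyadicHolderOn T c δ f) (hcont : ContinuousOn f (Icc 0 T))
    (hT : 0 < T) (hδ : 0 < δ) {x : ℝ} (hx : x ∈ Icc 0 T) (n : ℕ) :
    dist (f (dyadicIndex T n x * (T / 2 ^ n))) (f x)
      ≤ c * (T / 2 ^ n) ^ δ * ((1 / 2) ^ δ / (1 - (1 / 2) ^ δ)) := by
  set r : ℝ := (1 / 2) ^ δ
  have hr : r < 1 := rpow_lt_one (by norm_num) (by norm_num) hδ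
  have hlim : Tendsto (fun m => f (dyadicIndex T m x * (T / 2 ^ m))) atTop (𝓝 (f x)) :=
    (hcont x hx).tendsto.comp <| tendsto_nhdsWithin_iff.2
      ⟨tendsto_dyadicIndex_mul hT hx.1, .of_forall fun m => dyadicIndex_mul_mem_Icc hT hx m⟩
  have hstep (m : ℕ) : dist (f (dyadicIndex T m x * (T / 2 ^ m)))
      (f (dyadicIndex T (m + 1) x * (T / 2 ^ (m + 1)))) ≤ c * T ^ δ * r * r ^ m := by
    convert hf.dist_dyadic_succ_le hT hx.2 m using 1
    rw [div_two_pow_rpow hT.le, pow_succ]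
    ring
  convert dist_le_of_le_geometric_of_tendsto r _ hr hstep hlim n using 1
  rw [div_two_pow_rpow hT.le]
  ring

theorem dist_le (hf : DyadicHolderOn T c δ f) (hcont : ContinuousOn f (Icc 0 T))
    (hT : 0 < T) (hδ : 0 < δ) {s t : ℝ} (hs : s ∈ Icc 0 T) (ht : t ∈ Icc 0 T) :
    dist (f t) (f s) ≤ chainingConst δ * c * |t - s| ^ δ := by
  wlog hst : s ≤ t generalizing s t
  · rw [dist_comm, abs_sub_comm]
    exact this ht hs (le_of_not_ge hst)
  rw [abs_of_nonneg (sub_nonneg.2 hst)]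
  obtain rfl | hlt := hst.eq_or_lt
  · simp [zero_rpow hδ.ne']
  obtain ⟨n, hn, hn'⟩ := exists_nat_pow_near (x := T / (t - s))
    ((one_le_div (sub_pos.2 hlt)).2 (by linarith [ht.2, hs.1])) one_lt_two
  have hsmall : t - s ≤ T / 2 ^ n := by
    rw [le_div_iff₀ (by positivity), mul_comm]
    exact (le_div_iff₀ (sub_pos.2 hlt)).1 hn
  have hlarge : T / 2 ^ n ≤ 2 * (t - s) := by
    rw [div_le_iff₀ (by positivity)]
    rw [div_lt_iff₀ (sub_pos.2 hlt), pow_succ] at hn'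
    linarith
  set p : ℝ → ℝ := fun x => dyadicIndex T n x * (T / 2 ^ n)
  set q : ℝ := (1 / 2) ^ δ / (1 - (1 / 2) ^ δ)
  have hq : 0 ≤ q := div_nonneg (by positivity)
    (by linarith [rpow_lt_one (by norm_num : (0 : ℝ) ≤ 1 / 2) (by norm_num) hδ])
  have hmid : dist (f (p t)) (f (p s)) ≤ c * (T / 2 ^ n) ^ δ :=
    hf.dist_le_of_le_of_le_succ hT (dyadicIndex_mono hT n hst)
      (dyadicIndex_le_add_one hT hs.1 hsmall) (dyadicIndex_le hT ht.2 n)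
  have hscale : (T / 2 ^ n) ^ δ ≤ 2 ^ δ * (t - s) ^ δ := by
    rw [← mul_rpow (by norm_num) (sub_pos.2 hlt).le]
    exact rpow_le_rpow (by positivity) hlarge hδ.le
  calc dist (f t) (f s)
      ≤ dist (f (p t)) (f t) + dist (f (p t)) (f (p s)) + dist (f (p s)) (f s) :=
        dist_comm (f t) (f (p t)) ▸ dist_triangle4 _ _ _ _
    _ ≤ c * (T / 2 ^ n) ^ δ * q + c * (T / 2 ^ n) ^ δ + c * (T / 2 ^ n) ^ δ * q := by
        gcongr
        · exact hf.dist_dyadic_le hcont hT hδ ht n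
        · exact hf.dist_dyadic_le hcont hT hδ hs n
    _ = c * (T / 2 ^ n) ^ δ * (1 + 2 * q) := by ring
    _ ≤ c * (2 ^ δ * (t - s) ^ δ) * (1 + 2 * q) := by
        gcongr
        exact hf.nonneg hT
    _ = chainingConst δ * c * (t - s) ^ δ := by
        unfold chainingConst
        ring

end DyadicHolderOn

lemma ProbabilityTheory.hasSubgaussianMGF_id_gaussianReal (v : ℝ≥0) :
    HasSubgaussianMGF id v (gaussianReal 0 v) where
  integrable_exp_mul := integrable_exp_mul_gaussianReal
  mgf_le t := by simp [mgf_id_gaussianReal]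

lemma ProbabilityTheory.HasSubgaussianMGF.measureReal_abs_ge_le {Ω : Type*} [MeasurableSpace Ω]
    {μ : Measure Ω} {X : Ω → ℝ} {c : ℝ≥0} (h : HasSubgaussianMGF X c μ) {ε : ℝ}
    (hε : 0 ≤ ε) :
    μ.real {ω | ε ≤ |X ω|} ≤ 2 * exp (-ε ^ 2 / (2 * c)) := by
  have hsplit : {ω | ε ≤ |X ω|} = {ω | ε ≤ X ω} ∪ {ω | ε ≤ (-X) ω} := by
    ext ω
    exact le_abs (a := ε) (b := X ω)
  rw [hsplit, two_mul]
  exact (measureReal_union_le _ _).trans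
    (add_le_add (h.measure_ge_le hε) (h.neg.measure_ge_le hε))

lemma measureReal_abs_sub_ge_le {Ω : Type*} [MeasurableSpace Ω] {P : Measure Ω}
    {W : ℝ → Ω → ℝ} (hmeas : ∀ t, Measurable (W t))
    (hincr : ∀ s t : ℝ, 0 ≤ s → s ≤ t →
      P.map (fun ω => W t ω - W s ω) = gaussianReal 0 (t - s).toNNReal)
    {s t : ℝ} (hs : 0 ≤ s) (hst : s ≤ t) {a : ℝ} (ha : 0 ≤ a) :
    P.real {ω | a ≤ |W t ω - W s ω|} ≤ 2 * exp (-a ^ 2 / (2 * (t - s))) := by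
  have h : HasSubgaussianMGF (fun ω => W t ω - W s ω) (t - s).toNNReal P := by
    rw [← HasSubgaussianMGF.id_map_iff (X := fun ω => W t ω - W s ω)
      ((hmeas t).sub (hmeas s)).aemeasurable, hincr s t hs hst]
    exact hasSubgaussianMGF_id_gaussianReal _
  simpa [Real.coe_toNNReal _ (sub_nonneg.2 hst)] using h.measureReal_abs_ge_le ha

lemma two_pow_mul_exp_neg_le {a B : ℝ} (hB : 1 < B) (ha : 2 * log 2 ≤ a * (B - 1)) (n : ℕ) :
    2 ^ n * exp (-(a * B ^ n)) ≤ exp (-a) * (1 / 2) ^ n := by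
  have ha0 : 0 ≤ a := nonneg_of_mul_nonneg_left ((by positivity : 0 ≤ 2 * log 2).trans ha)
    (by linarith)
  have hbern : a * (1 + n * (B - 1)) ≤ a * B ^ n := by
    gcongr
    simpa using one_add_mul_le_pow (by linarith : (-2 : ℝ) ≤ B - 1) n
  have hpow (y : ℝ) (hy : 0 < y) : y ^ n = exp (n * log y) := by
    rw [exp_nat_mul, exp_log hy]
  rw [hpow 2 two_pos, hpow (1 / 2) (by norm_num), ← exp_add, ← exp_add, exp_le_exp,
    one_div, log_inv]
  nlinarith [(Nat.cast_nonneg n : (0 : ℝ) ≤ n)]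

lemma tsum_ofReal_two_pow_mul_exp_neg_le {a B : ℝ} (hB : 1 < B) (ha : 2 * log 2 ≤ a * (B - 1)) :
    ∑' n : ℕ, ENNReal.ofReal (2 ^ n * (2 * exp (-(a * B ^ n))))
      ≤ ENNReal.ofReal (4 * exp (-a)) :=
  calc ∑' n : ℕ, ENNReal.ofReal (2 ^ n * (2 * exp (-(a * B ^ n))))
      ≤ ∑' n : ℕ, ENNReal.ofReal (2 * exp (-a) * (1 / 2) ^ n) := by
        refine ENNReal.tsum_le_tsum fun n => ENNReal.ofReal_le_ofReal ?_
        nlinarith [two_pow_mul_exp_neg_le hB ha n]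
    _ = ENNReal.ofReal (4 * exp (-a)) := by
        rw [← ENNReal.ofReal_tsum_of_nonneg (fun n => by positivity)
          ((summable_geometric_two).mul_left _), tsum_mul_left, tsum_geometric_two]
        ring_nf

lemma le_max_mul_exp_of_le_one {p a a₀ C : ℝ} (hp : p ≤ 1)
    (hlarge : a₀ ≤ a → p ≤ C * exp (-a)) :
    p ≤ max C (exp a₀) * exp (-a) := by
  by_cases ha : a₀ ≤ a
  · exact (hlarge ha).trans (by gcongr; exact le_max_left _ _)
  · calc p ≤ exp a₀ * exp (-a₀) := by rw [← exp_add, add_neg_cancel, exp_zero]; exact hp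
      _ ≤ max C (exp a₀) * exp (-a) := by gcongr; exacts [le_max_right _ _, by linarith]

lemma div_two_pow_rpow_sq_div_self {T : ℝ} (hT : 0 < T) (δ : ℝ) (n : ℕ) :
    ((T / 2 ^ n) ^ δ) ^ 2 / (T / 2 ^ n) = T ^ (2 * δ - 1) * (2 ^ (1 - 2 * δ)) ^ n := by
  have hh : 0 < T / 2 ^ n := by positivity
  rw [← rpow_natCast, ← rpow_mul hh.le, ← rpow_sub_one hh.ne', div_rpow hT.le (by positivity),
    ← rpow_natCast, ← rpow_natCast, ← rpow_mul (by norm_num), ← rpow_mul (by norm_num),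
    div_eq_mul_inv, ← rpow_neg (by norm_num)]
  ring_nf

def holderViolation {Ω : Type*} (W : ℝ → Ω → ℝ) (T δ N : ℝ) : Set Ω :=
  {ω | ∃ s ∈ Icc 0 T, ∃ t ∈ Icc 0 T, N * |t - s| ^ δ < |W t ω - W s ω|}

-- At level `n`, with `h = T / 2 ^ n`, the Chernoff exponent of a dyadic increment exceeding
-- `N / chainingConst δ * h ^ δ` is `holderTailRate δ T * N ^ 2 * (2 ^ (1 - 2 * δ)) ^ n`.
noncomputable def holderTailRate (δ T : ℝ) : ℝ := T ^ (2 * δ - 1) / (2 * chainingConst δ ^ 2)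

lemma holderViolation_subset_dyadic {Ω : Type*} {W : ℝ → Ω → ℝ} {T δ N : ℝ}
    (hcont : ∀ ω, ContinuousOn (fun t => W t ω) (Icc 0 T)) (hT : 0 < T) (hδ : 0 < δ) :
    holderViolation W T δ N ⊆ ⋃ n : ℕ, ⋃ k ∈ Finset.range (2 ^ n),
      {ω | N / chainingConst δ * (T / 2 ^ n) ^ δ
          ≤ |W ((k + 1) * (T / 2 ^ n)) ω - W (k * (T / 2 ^ n)) ω|} := by
  rintro ω ⟨s, hs, t, ht, hviol⟩
  by_contra hω
  simp only [mem_iUnion, Finset.mem_range, mem_ofPred_eq, not_exists, not_le] at hω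
  have hdy : DyadicHolderOn T (N / chainingConst δ) δ (W · ω) := fun n k hk =>
    (hω n k hk).le
  have := hdy.dist_le (hcont ω) hT hδ hs ht
  rw [Real.dist_eq, mul_div_cancel₀ _ (chainingConst_pos hδ).ne'] at this
  linarith

lemma measure_holderViolation_le {Ω : Type*} [MeasurableSpace Ω] {P : Measure Ω}
    [IsProbabilityMeasure P] {W : ℝ → Ω → ℝ} {T δ N : ℝ}
    (hmeas : ∀ t, Measurable (W t))
    (hcont : ∀ ω, ContinuousOn (fun t => W t ω) (Icc 0 T))
    (hincr : ∀ s t : ℝ, 0 ≤ s → s ≤ t →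
      P.map (fun ω => W t ω - W s ω) = gaussianReal 0 (t - s).toNNReal)
    (hT : 0 < T) (hδ : δ ∈ Ioo 0 (1 / 2)) (hN : 0 ≤ N)
    (hlarge : 2 * log 2 ≤ holderTailRate δ T * N ^ 2 * (2 ^ (1 - 2 * δ) - 1)) :
    P (holderViolation W T δ N) ≤ ENNReal.ofReal (4 * exp (-(holderTailRate δ T * N ^ 2))) := by
  set K := chainingConst δ
  set a := holderTailRate δ T * N ^ 2
  set B : ℝ := 2 ^ (1 - 2 * δ)
  have hB : 1 < B := one_lt_rpow (by norm_num) (by linarith [hδ.2])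
  have hlevel (n k : ℕ) : P {ω | N / K * (T / 2 ^ n) ^ δ
      ≤ |W ((k + 1) * (T / 2 ^ n)) ω - W (k * (T / 2 ^ n)) ω|}
      ≤ ENNReal.ofReal (2 * exp (-(a * B ^ n))) := by
    rw [← ofReal_measureReal]
    refine ENNReal.ofReal_le_ofReal ((measureReal_abs_sub_ge_le hmeas hincr (by positivity)
      (by gcongr; linarith) (by have := chainingConst_pos hδ.1; positivity)).trans_eq ?_)
    have hlen : ((k : ℝ) + 1) * (T / 2 ^ n) - k * (T / 2 ^ n) = T / 2 ^ n := by ring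
    rw [hlen, mul_pow]
    congr 2
    calc -((N / K) ^ 2 * ((T / 2 ^ n) ^ δ) ^ 2) / (2 * (T / 2 ^ n))
        = -((N / K) ^ 2 / 2 * (((T / 2 ^ n) ^ δ) ^ 2 / (T / 2 ^ n))) := by ring
      _ = -(a * B ^ n) := by
        rw [div_two_pow_rpow_sq_div_self hT]
        simp only [a, K, holderTailRate]
        ring
  calc P (holderViolation W T δ N)
      ≤ ∑' n : ℕ, ∑ k ∈ Finset.range (2 ^ n), P {ω | N / K * (T / 2 ^ n) ^ δ
          ≤ |W ((k + 1) * (T / 2 ^ n)) ω - W (k * (T / 2 ^ n)) ω|} :=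
        (measure_mono (holderViolation_subset_dyadic hcont hT hδ.1)).trans <|
          (measure_iUnion_le _).trans (ENNReal.tsum_le_tsum fun n => measure_biUnion_finset_le _ _)
    _ ≤ ∑' n : ℕ, ENNReal.ofReal (2 ^ n * (2 * exp (-(a * B ^ n)))) := by
        refine ENNReal.tsum_le_tsum fun n => ?_
        calc _ ≤ ∑ k ∈ Finset.range (2 ^ n), ENNReal.ofReal (2 * exp (-(a * B ^ n))) :=
              Finset.sum_le_sum fun k _ => hlevel n k
          _ = _ := by
              rw [Finset.sum_const, Finset.card_range, nsmul_eq_mul, ← ENNReal.ofReal_natCast,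
                ← ENNReal.ofReal_mul (by positivity)]
              push_cast
              rfl
    _ ≤ ENNReal.ofReal (4 * exp (-a)) := tsum_ofReal_two_pow_mul_exp_neg_le hB hlarge

theorem brownian_holder_tail_bound_general
    {Ω : Type*} [MeasurableSpace Ω] (P : Measure Ω) [IsProbabilityMeasure P]
    (W : ℝ → Ω → ℝ)
    (hmeas : ∀ t : ℝ, Measurable (W t))
    (hcont : ∀ ω : Ω, ContinuousOn (fun t => W t ω) (Set.Ici (0:ℝ)))
    (hincr : ∀ s t : ℝ, 0 ≤ s → s ≤ t →
      P.map (fun ω => W t ω - W s ω) = ProbabilityTheory.gaussianReal 0 (t - s).toNNReal)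
    (δ T : ℝ) (hδ : δ ∈ Set.Ioo (0:ℝ) (1/2)) (hT : 0 < T) :
    ∃ c₁ > (0:ℝ), ∃ c₂ > (0:ℝ), ∀ N : ℝ, 0 < N →
      (P {ω | ∃ s ∈ Set.Icc (0:ℝ) T, ∃ t ∈ Set.Icc (0:ℝ) T,
          N * |t - s| ^ δ < |W t ω - W s ω|}).toReal
        ≤ c₁ * Real.exp (-c₂ * N ^ 2) := by
  have hκ : 0 < holderTailRate δ T :=
    div_pos (rpow_pos_of_pos hT _) (by have := chainingConst_pos hδ.1; positivity)
  have hB : 0 < (2 : ℝ) ^ (1 - 2 * δ) - 1 :=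
    sub_pos.2 (one_lt_rpow (by norm_num) (by linarith [hδ.2]))
  refine ⟨max 4 (exp (2 * log 2 / (2 ^ (1 - 2 * δ) - 1))), by positivity,
    holderTailRate δ T, hκ, fun N hN => ?_⟩
  rw [neg_mul]
  refine le_max_mul_exp_of_le_one measureReal_le_one fun hlarge => ?_
  refine ENNReal.toReal_le_of_le_ofReal (by positivity) <|
    measure_holderViolation_le hmeas (fun ω => (hcont ω).mono Icc_subset_Ici_self) hincr hT hδ
      hN.le ?_
  rwa [div_le_iff₀ hB] at hlarge

/-- Fernique-type estimate for the Hölder seminorm of Brownian motion: for a standard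
one-dimensional Brownian motion `W` (continuous paths, `W 0 = 0`, independent increments,
Gaussian increments with variance `t − s`), for every `δ ∈ (0,1/2)` and `T > 0` there exist
`c₁, c₂ > 0` (depending only on `δ, T`) such that for all `N > 0`,
`P(∃ s,t ∈ [0,T], |W_t − W_s| > N|t−s|^δ) ≤ c₁ e^{−c₂ N²}`. -/
theorem brownian_holder_tail_bound
    {Ω : Type*} [MeasurableSpace Ω] (P : Measure Ω) [IsProbabilityMeasure P]
    (W : ℝ → Ω → ℝ)
    (hmeas : ∀ t : ℝ, Measurable (W t))
    (hcont : ∀ ω : Ω, ContinuousOn (fun t => W t ω) (Set.Ici (0:ℝ)))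
    (hW0 : ∀ ω : Ω, W 0 ω = 0)
    (hincr : ∀ s t : ℝ, 0 ≤ s → s ≤ t →
      P.map (fun ω => W t ω - W s ω) = ProbabilityTheory.gaussianReal 0 (t - s).toNNReal)
    (hindep : ∀ (m : ℕ) (t : ℕ → ℝ), Monotone t → 0 ≤ t 0 →
      ProbabilityTheory.iIndepFun
        (fun (i : Fin m) (ω : Ω) => W (t ((i : ℕ) + 1)) ω - W (t (i : ℕ)) ω) P)
    (δ T : ℝ) (hδ : δ ∈ Set.Ioo (0:ℝ) (1/2)) (hT : 0 < T) :
    ∃ c₁ > (0:ℝ), ∃ c₂ > (0:ℝ), ∀ N : ℝ, 0 < N →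
      (P {ω | ∃ s ∈ Set.Icc (0:ℝ) T, ∃ t ∈ Set.Icc (0:ℝ) T,
          N * |t - s| ^ δ < |W t ω - W s ω|}).toReal
        ≤ c₁ * Real.exp (-c₂ * N ^ 2) :=
  brownian_holder_tail_bound_general P W hmeas hcont hincr δ T hδ hT
end
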